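/- arXiv:1209.5964 — 5 statements merged into one kernel-verified Lean document; each statement's English description precedes it below -/
import Mathlib

section
/- For every d ≥ 2: M_d ⊆ S^{d×d}_{++} (every element of M_d is positive definite), and the identity matrix Id belongs to M_d. -/
/-- The set `𝕄_d = {Id − b⊗b : |b| = 1}` of symmetric matrices. -/
def MdBase (d : ℕ) : Set (Matrix (Fin d) (Fin d) ℝ) :=
  {M | ∃ b : Fin d → ℝ, (∑ i, (b i) ^ 2 = 1) ∧ M = 1 - Matrix.vecMulVec b b}

/-- The conic hull `𝕄_d^{conic}`: all finite sums `Σ αᵢ (Id − bᵢ⊗bᵢ)` with `αᵢ > 0`,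
`|bᵢ| = 1`. -/
def MdConic (d : ℕ) : Set (Matrix (Fin d) (Fin d) ℝ) :=
  {M | ∃ (m : ℕ) (α : Fin m → ℝ) (b : Fin m → Fin d → ℝ),
    (∀ i, 0 < α i) ∧ (∀ i, ∑ j, (b i j) ^ 2 = 1) ∧
    M = ∑ i, α i • (1 - Matrix.vecMulVec (b i) (b i))}

/-- `M_d`: the interior of `𝕄_d^{conic}` taken in the subspace `S^{d×d}` of symmetric
matrices (a matrix `R` is in the relative interior iff it is symmetric and there is an
open set `U ∋ R` of the matrix space such that every symmetric member of `U` lies in the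
conic hull). -/
def Md (d : ℕ) : Set (Matrix (Fin d) (Fin d) ℝ) :=
  {R | R.IsSymm ∧ ∃ U : Set (Matrix (Fin d) (Fin d) ℝ),
    IsOpen U ∧ R ∈ U ∧ ∀ S ∈ U, S.IsSymm → S ∈ MdConic d}

/-! Each `Id − b ⊗ b` with `|b| = 1` is an orthogonal projection, hence positive semidefinite, so
the cone `𝕄_d^{conic}` consists of positive semidefinite matrices. If `R` lies in the relative
interior, then so does `R − t • Id` for small `t > 0`, and `R = (R − t • Id) + t • Id` is positive
definite.

Conversely, write a symmetric `S` as `Σ μᵢ uᵢ uᵢᵀ` with an orthonormal basis `uᵢ`. Since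
`Σ uᵢ uᵢᵀ = Id`, we get `S = Σ (T − μᵢ) (Id − uᵢ uᵢᵀ)` for `T = (Σ μᵢ) / (d − 1)`, and all these
coefficients are positive as soon as every eigenvalue `μᵢ` is within `1 / (2d)` of `1`. This holds
on a neighbourhood of `Id`, because `μᵢ − 1 = uᵢᵀ (S − Id) uᵢ` and the entries of `uᵢ` are at most
`1` in absolute value. -/

open Matrix

namespace Matrix

variable {n : Type*} [Fintype n]

theorem abs_transpose_mul_mul_apply_le {U : Matrix n n ℝ} (hU : ∀ i j, |U i j| ≤ 1)
    (A : Matrix n n ℝ) (i i' : n) : |(Uᵀ * A * U) i i'| ≤ ∑ j, ∑ k, |A j k| := by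
  rw [mul_assoc, mul_apply]
  calc |∑ j, Uᵀ i j * (A * U) j i'|
      ≤ ∑ j, ∑ k, |U j i| * |A j k| * |U k i'| := by
        refine (Finset.abs_sum_le_sum_abs _ _).trans (Finset.sum_le_sum fun j _ => ?_)
        rw [transpose_apply, mul_apply, Finset.mul_sum]
        refine (Finset.abs_sum_le_sum_abs _ _).trans (Finset.sum_le_sum fun k _ => ?_)
        rw [abs_mul, abs_mul, mul_assoc]
    _ ≤ ∑ j, ∑ k, |A j k| := by
        gcongr with j _ k _
        calc |U j i| * |A j k| * |U k i'| ≤ 1 * |A j k| * 1 := by gcongr <;> exact hU _ _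
          _ = |A j k| := by ring

variable [DecidableEq n]

theorem posSemidef_one_sub_vecMulVec_self {b : n → ℝ} (hb : b ⬝ᵥ b = 1) :
    (1 - vecMulVec b b).PosSemidef := by
  have hP : (1 - vecMulVec b b)ᴴ * (1 - vecMulVec b b) = 1 - vecMulVec b b := by
    rw [conjTranspose_eq_transpose_of_trivial, transpose_sub, transpose_one, transpose_vecMulVec,
      sub_mul, mul_sub, mul_sub, one_mul, mul_one, one_mul, vecMulVec_mul_vecMulVec, hb, one_smul]
    abel
  exact hP ▸ posSemidef_conjTranspose_mul_self _

theorem sum_smul_vecMulVec_row {α : Type*} [CommSemiring α] (A : Matrix n n α) (c : n → α) :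
    ∑ i, c i • vecMulVec (A i) (A i) = Aᵀ * diagonal c * A := by
  ext j k
  simp [mul_apply, diagonal_apply, vecMulVec_apply, Matrix.sum_apply, mul_comm, mul_left_comm]

theorem IsSymm.exists_orthogonal_diagonalization {S : Matrix n n ℝ} (hS : S.IsSymm) :
    ∃ U ∈ orthogonalGroup n ℝ, ∃ μ : n → ℝ, S = U * diagonal μ * Uᵀ := by
  have hH : S.IsHermitian := by
    rwa [IsHermitian, conjTranspose_eq_transpose_of_trivial]
  refine ⟨hH.eigenvectorUnitary, hH.eigenvectorUnitary.2, hH.eigenvalues, ?_⟩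
  conv_lhs => rw [hH.spectral_theorem]
  simp [star_eq_conjTranspose]

theorem abs_sub_one_le_of_eq_orthogonal_conj {U : Matrix n n ℝ} (hU : U ∈ orthogonalGroup n ℝ)
    {μ : n → ℝ} {S : Matrix n n ℝ} (hS : S = U * diagonal μ * Uᵀ) (i : n) :
    |μ i - 1| ≤ ∑ j, ∑ k, |(S - 1) j k| := by
  have hUtU : Uᵀ * U = 1 := by simpa [star_eq_conjTranspose] using hU.1
  have hconj : Uᵀ * (S - 1) * U = diagonal μ - 1 := by
    rw [hS, mul_sub, sub_mul, mul_one, hUtU, ← mul_assoc, ← mul_assoc, hUtU, one_mul, mul_assoc,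
      hUtU, mul_one]
  have hentry : ∀ j k, |U j k| ≤ 1 := fun j k => by
    simpa [Real.norm_eq_abs] using entry_norm_bound_of_unitary hU j k
  simpa [hconj] using abs_transpose_mul_mul_apply_le hentry (S - 1) i i

end Matrix

theorem sub_one_mul_lt_sum_of_abs_sub_one_le {d : ℕ} {μ : Fin d → ℝ} {e : ℝ}
    (he : 2 * d * e < 1) (hμ : ∀ i, |μ i - 1| ≤ e) (i : Fin d) : (d - 1 : ℝ) * μ i < ∑ j, μ j := by
  have hd : (1 : ℝ) ≤ d := by exact_mod_cast i.pos
  have he0 : 0 ≤ e := (abs_nonneg _).trans (hμ i)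
  have hupper : μ i ≤ 1 + e := by linarith [(abs_le.mp (hμ i)).2]
  have hlower : d * (1 - e) ≤ ∑ j, μ j :=
    calc d * (1 - e) = ∑ _j : Fin d, (1 - e) := by simp [mul_sub]
      _ ≤ ∑ j, μ j := Finset.sum_le_sum fun j _ => by linarith [(abs_le.mp (hμ j)).1]
  nlinarith

theorem mul_diagonal_mul_transpose_mem_MdConic {d : ℕ} (hd : 2 ≤ d)
    {U : Matrix (Fin d) (Fin d) ℝ} (hU : U ∈ orthogonalGroup (Fin d) ℝ) {μ : Fin d → ℝ}
    (hμ : ∀ i, (d - 1 : ℝ) * μ i < ∑ j, μ j) :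
    U * diagonal μ * Uᵀ ∈ MdConic d := by
  have hd1 : (0 : ℝ) < d - 1 := by
    have : (2 : ℝ) ≤ d := by exact_mod_cast hd
    linarith
  have hUUt : U * Uᵀ = 1 := by simpa [star_eq_conjTranspose] using hU.2
  have hUtU : Uᵀ * U = 1 := by simpa [star_eq_conjTranspose] using hU.1
  set T := (∑ j, μ j) / (d - 1)
  refine ⟨d, fun i => T - μ i, Uᵀ, fun i => ?_, fun i => ?_, ?_⟩
  · rw [sub_pos, lt_div_iff₀ hd1, mul_comm]
    exact hμ i
  · simpa [mul_apply, sq] using congrFun (congrFun hUtU i) i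
  · have hsum : ∑ i, (T - μ i) = T := by
      rw [Finset.sum_sub_distrib, Finset.sum_const, Finset.card_univ, Fintype.card_fin,
        nsmul_eq_mul]
      linear_combination mul_div_cancel₀ (∑ j, μ j) hd1.ne'
    have hdiag : diagonal (fun i => T - μ i) = T • 1 - diagonal μ := by
      ext j k; by_cases h : j = k <;> simp [h, one_apply]
    suffices h : ∑ i, (T - μ i) • (1 - vecMulVec (Uᵀ i) (Uᵀ i)) = U * diagonal μ * Uᵀ from h.symm
    simp_rw [smul_sub]
    rw [Finset.sum_sub_distrib, ← Finset.sum_smul, hsum, sum_smul_vecMulVec_row,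
      transpose_transpose, hdiag, mul_sub, sub_mul, Matrix.mul_smul, mul_one, Matrix.smul_mul, hUUt,
      sub_sub_cancel]

theorem posSemidef_of_mem_MdConic {d : ℕ} {M : Matrix (Fin d) (Fin d) ℝ} (hM : M ∈ MdConic d) :
    M.PosSemidef := by
  obtain ⟨m, α, b, hα, hb, rfl⟩ := hM
  refine posSemidef_sum _ fun i _ => ?_
  exact (posSemidef_one_sub_vecMulVec_self (by simpa [dotProduct, sq] using hb i)).smul (hα i).le

theorem posDef_of_mem_Md {d : ℕ} {R : Matrix (Fin d) (Fin d) ℝ} (hR : R ∈ Md d) : R.PosDef := by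
  obtain ⟨hRsymm, U, hUopen, hRU, hUconic⟩ := hR
  have hcont : Continuous fun t : ℝ => R - t • (1 : Matrix (Fin d) (Fin d) ℝ) := by fun_prop
  obtain ⟨t, htU, ht⟩ : ∃ t : ℝ, R - t • 1 ∈ U ∧ 0 < t :=
    ((((hcont.tendsto' 0 R (by simp)).mono_left nhdsWithin_le_nhds).eventually
      (hUopen.mem_nhds hRU)).and (self_mem_nhdsWithin (s := Set.Ioi 0))).exists
  have hsymm : (R - t • 1).IsSymm := hRsymm.sub (isSymm_one.smul t)
  exact sub_add_cancel R (t • 1) ▸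
    PosDef.posSemidef_add (posSemidef_of_mem_MdConic (hUconic _ htU hsymm)) (PosDef.one.smul ht)

theorem one_mem_Md {d : ℕ} (hd : 2 ≤ d) : (1 : Matrix (Fin d) (Fin d) ℝ) ∈ Md d := by
  refine ⟨isSymm_one, {S | ∑ j, ∑ k, |(S - 1) j k| < 1 / (2 * d)},
    isOpen_lt (by fun_prop) continuous_const, by simp; positivity, fun S hS hSsymm => ?_⟩
  have hd0 : (0 : ℝ) < 2 * d := by positivity
  obtain ⟨U, hU, μ, hSeq⟩ := hSsymm.exists_orthogonal_diagonalization
  rw [hSeq]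
  have hclose : 2 * d * ∑ j, ∑ k, |(S - 1) j k| < 1 := by rwa [← lt_div_iff₀' hd0]
  exact mul_diagonal_mul_transpose_mem_MdConic hd hU fun i =>
    sub_one_mul_lt_sum_of_abs_sub_one_le hclose (abs_sub_one_le_of_eq_orthogonal_conj hU hSeq) i

/-- For every `d ≥ 2`, every element of `M_d` is positive definite, and the identity
matrix belongs to `M_d`. -/
theorem Md_subset_posDef_and_id_mem (d : ℕ) (hd : 2 ≤ d) :
    (∀ R ∈ Md d, R.PosDef) ∧ (1 : Matrix (Fin d) (Fin d) ℝ) ∈ Md d :=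
  ⟨fun _ hR => posDef_of_mem_Md hR, one_mem_Md hd⟩
end

section
/- Let d ≥ 2 and let R be a symmetric positive definite d×d real matrix. Then R ∈ M_d if and only if ((tr R)/(d−1))·Id − R is positive definite. -/
/-!
The linear map `Q = traceShift d`, `Q M = (tr M/(d−1))·Id − M`, is invertible, with inverse
`P ↦ (tr P)·Id − P`, and sends `Id − b⊗b` to `b⊗b` for `|b| = 1`. Since every positive
semidefinite matrix is a finite sum of matrices `v⊗v`, `Q` maps `𝕄_d^{conic}` onto the cone of
positive semidefinite matrices. Being a linear homeomorphism preserving symmetry, it then maps the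
interior `M_d` relative to `S^{d×d}` onto the interior of that cone in `S^{d×d}`, the positive
definite matrices.
-/

open Matrix Filter Topology

theorem IsStrictlyPositive.eventually_nonneg {A : Type*} [NormedRing A] [NormedAlgebra ℝ A]
    [CompleteSpace A] [NormOneClass A] [StarRing A] [PartialOrder A] [StarOrderedRing A]
    [NonnegSpectrumClass ℝ A] [ContinuousFunctionalCalculus ℝ A IsSelfAdjoint] {a : A}
    (ha : IsStrictlyPositive a) : ∀ᶠ b in 𝓝 a, IsSelfAdjoint b → 0 ≤ b := by
  have : Nontrivial A := NormOneClass.nontrivial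
  obtain ⟨r, hr, hra⟩ := (CFC.exists_pos_algebraMap_le_iff ha.isSelfAdjoint).2
    fun x hx ↦ ha.spectrum_pos hx
  filter_upwards [Metric.ball_mem_nhds a hr] with b hba hb
  have hlow : algebraMap ℝ A (-‖b - a‖) ≤ b - a :=
    (algebraMap_le_iff_le_spectrum (hb.sub ha.isSelfAdjoint)).2 fun x hx ↦
      neg_le_of_abs_le (spectrum.norm_le_norm_of_mem hx)
  have hle : algebraMap ℝ A (r - ‖b - a‖) ≤ b := by
    simpa [sub_eq_add_neg] using add_le_add hra hlow
  simpa using (algebraMap_le_iff_le_spectrum (r := 0) hb).2 fun x hx ↦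
    (sub_nonneg.2 (mem_ball_iff_norm.1 hba).le).trans
      ((algebraMap_le_iff_le_spectrum hb).1 hle x hx)

theorem Matrix.PosDef.eventually_posSemidef {n : Type*} [Fintype n] [DecidableEq n]
    {A : Matrix n n ℝ} (hA : A.PosDef) : ∀ᶠ B in 𝓝 A, B.IsHermitian → B.PosSemidef := by
  cases isEmpty_or_nonempty n
  · exact .of_forall fun B _ ↦ Subsingleton.elim 0 B ▸ .zero
  open scoped MatrixOrder Matrix.Norms.L2Operator in
  exact hA.isStrictlyPositive.eventually_nonneg.mono fun B hB hBh ↦ (hB hBh).posSemidef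

section

variable {d : ℕ}

theorem zero_mem_MdConic : (0 : Matrix (Fin d) (Fin d) ℝ) ∈ MdConic d :=
  ⟨0, finZeroElim, finZeroElim, finZeroElim, finZeroElim, by simp⟩

theorem add_mem_MdConic {M N : Matrix (Fin d) (Fin d) ℝ} (hM : M ∈ MdConic d)
    (hN : N ∈ MdConic d) : M + N ∈ MdConic d := by
  obtain ⟨m, α, b, hα, hb, rfl⟩ := hM
  obtain ⟨n, β, c, hβ, hc, rfl⟩ := hN
  refine ⟨m + n, Fin.append α β, Fin.append b c, Fin.addCases ?_ ?_, Fin.addCases ?_ ?_, ?_⟩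
  all_goals simp [Fin.sum_univ_add, hα, hβ, hb, hc]

theorem sum_mem_MdConic {ι : Type*} (s : Finset ι) {M : ι → Matrix (Fin d) (Fin d) ℝ}
    (hM : ∀ i ∈ s, M i ∈ MdConic d) : ∑ i ∈ s, M i ∈ MdConic d :=
  Finset.sum_induction M (· ∈ MdConic d) (fun _ _ ↦ add_mem_MdConic) zero_mem_MdConic hM

theorem dotProduct_self_smul_one_sub_vecMulVec_mem_MdConic (v : Fin d → ℝ) :
    (v ⬝ᵥ v) • 1 - vecMulVec v v ∈ MdConic d := by
  rcases eq_or_ne v 0 with rfl | hv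
  · simpa using zero_mem_MdConic
  have hpos : 0 < v ⬝ᵥ v := dotProduct_self_star_pos_iff.2 hv
  set r := √(v ⬝ᵥ v)
  have hr : r ^ 2 = v ⬝ᵥ v := Real.sq_sqrt hpos.le
  have hr0 : r ≠ 0 := (Real.sqrt_pos.2 hpos).ne'
  refine ⟨1, fun _ ↦ v ⬝ᵥ v, fun _ ↦ r⁻¹ • v, fun _ ↦ hpos, fun _ ↦ ?_, ?_⟩
  · have hsq : ∑ j, v j ^ 2 = v ⬝ᵥ v := by simp [dotProduct, sq]
    simp only [Pi.smul_apply, smul_eq_mul, mul_pow, ← Finset.mul_sum, hsq, ← hr, inv_pow,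
      inv_mul_cancel₀ (pow_ne_zero 2 hr0)]
  · have hr2 : r ^ 2 * (r⁻¹ * r⁻¹) = 1 := by field_simp
    simp [smul_sub, smul_vecMulVec, vecMulVec_smul, smul_smul, ← hr, hr2]

noncomputable def traceShift (d : ℕ) :
    Matrix (Fin d) (Fin d) ℝ →ₗ[ℝ] Matrix (Fin d) (Fin d) ℝ where
  toFun M := (M.trace / ((d : ℝ) - 1)) • 1 - M
  map_add' M N := by simp only [trace_add, add_div, add_smul]; abel
  map_smul' c M := by simp only [trace_smul, smul_eq_mul, mul_div_assoc, smul_sub, smul_smul,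
    RingHom.id_apply]

theorem traceShift_apply (M : Matrix (Fin d) (Fin d) ℝ) :
    traceShift d M = (M.trace / ((d : ℝ) - 1)) • 1 - M :=
  rfl

theorem isHermitian_traceShift {M : Matrix (Fin d) (Fin d) ℝ} (hM : M.IsSymm) :
    (traceShift d M).IsHermitian := by
  rw [isHermitian_iff_isSymm, traceShift_apply]
  exact (isSymm_one.smul _).sub hM

theorem trace_traceShift (hd : d ≠ 1) (M : Matrix (Fin d) (Fin d) ℝ) :
    (traceShift d M).trace = M.trace / ((d : ℝ) - 1) := by
  have : (d : ℝ) - 1 ≠ 0 := sub_ne_zero.2 (mod_cast hd)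
  rw [traceShift_apply, trace_sub, trace_smul, trace_one, Fintype.card_fin, smul_eq_mul]
  field_simp
  ring

theorem traceShift_one (hd : d ≠ 1) :
    traceShift d 1 = ((d : ℝ) - 1)⁻¹ • (1 : Matrix (Fin d) (Fin d) ℝ) := by
  have : (d : ℝ) - 1 ≠ 0 := sub_ne_zero.2 (mod_cast hd)
  have hcoeff : (d : ℝ) / ((d : ℝ) - 1) - 1 = ((d : ℝ) - 1)⁻¹ := by field_simp; ring
  rw [traceShift_apply, trace_one, Fintype.card_fin, ← hcoeff, sub_smul, one_smul]

theorem trace_traceShift_smul_one_sub_traceShift (hd : d ≠ 1) (M : Matrix (Fin d) (Fin d) ℝ) :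
    (traceShift d M).trace • 1 - traceShift d M = M := by
  rw [trace_traceShift hd, traceShift_apply, sub_sub_cancel]

theorem traceShift_one_sub_vecMulVec (hd : d ≠ 1) {b : Fin d → ℝ} (hb : b ⬝ᵥ b = 1) :
    traceShift d (1 - vecMulVec b b) = vecMulVec b b := by
  have : (d : ℝ) - 1 ≠ 0 := sub_ne_zero.2 (mod_cast hd)
  rw [traceShift_apply, trace_sub, trace_one, trace_vecMulVec, hb, Fintype.card_fin,
    div_self this, one_smul, sub_sub_cancel]

theorem mem_MdConic_iff_posSemidef (hd : d ≠ 1) {M : Matrix (Fin d) (Fin d) ℝ} :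
    M ∈ MdConic d ↔ (traceShift d M).PosSemidef := by
  constructor
  · rintro ⟨m, α, b, hα, hb, rfl⟩
    rw [map_sum]
    refine posSemidef_sum _ fun i _ ↦ ?_
    rw [map_smul, traceShift_one_sub_vecMulVec hd (by simpa [dotProduct, sq] using hb i)]
    simpa using (posSemidef_vecMulVec_self_star (b i)).smul (hα i).le
  · intro hM
    obtain ⟨m, v, hv⟩ := posSemidef_iff_eq_sum_vecMulVec.1 hM
    rw [← trace_traceShift_smul_one_sub_traceShift hd M, hv]
    simp only [star_trivial, trace_sum, trace_vecMulVec, Finset.sum_smul, ← Finset.sum_sub_distrib]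
    exact sum_mem_MdConic _ fun i _ ↦ dotProduct_self_smul_one_sub_vecMulVec_mem_MdConic (v i)

theorem mem_Md_iff_eventually {R : Matrix (Fin d) (Fin d) ℝ} :
    R ∈ Md d ↔ R.IsSymm ∧ ∀ᶠ S in 𝓝 R, S.IsSymm → S ∈ MdConic d := by
  simp only [Md, Set.mem_ofPred_eq, eventually_nhds_iff]
  exact and_congr_right fun _ ↦
    ⟨fun ⟨U, hU, hRU, h⟩ ↦ ⟨U, h, hU, hRU⟩, fun ⟨U, h, hU, hRU⟩ ↦ ⟨U, hU, hRU, h⟩⟩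

theorem mem_Md_iff_posDef_traceShift (hd : 2 ≤ d) {R : Matrix (Fin d) (Fin d) ℝ} :
    R ∈ Md d ↔ R.IsSymm ∧ (traceShift d R).PosDef := by
  have hd1 : d ≠ 1 := by omega
  rw [mem_Md_iff_eventually]
  refine and_congr_right fun hR ↦ ⟨fun hcone ↦ ?_, fun hQ ↦ ?_⟩
  -- `R - t • 1` lies in the cone for small `t > 0`, and `traceShift` shifts it by `-(t/(d-1)) • 1`.
  · have hlim : Tendsto (fun t : ℝ ↦ R - t • 1) (𝓝[>] 0) (𝓝 R) := by
      refine (Continuous.tendsto' ?_ 0 R (by simp)).mono_left nhdsWithin_le_nhds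
      fun_prop
    obtain ⟨t, hconeT, ht⟩ := ((hlim.eventually hcone).and self_mem_nhdsWithin).exists
    have hpsd := (mem_MdConic_iff_posSemidef hd1).1 (hconeT (hR.sub (isSymm_one.smul t)))
    rw [map_sub, map_smul, traceShift_one hd1, smul_smul] at hpsd
    have hc : 0 < t * ((d : ℝ) - 1)⁻¹ := by
      have : (2 : ℝ) ≤ d := mod_cast hd
      exact mul_pos ht (inv_pos.2 (by linarith))
    simpa using (PosDef.one.smul hc).add_posSemidef hpsd
  · have hcont : Continuous (traceShift d) := LinearMap.continuous_of_finiteDimensional _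
    filter_upwards [hcont.continuousAt.eventually hQ.eventually_posSemidef] with S hS hSsymm
    exact (mem_MdConic_iff_posSemidef hd1).2 (hS (isHermitian_traceShift hSsymm))

end

theorem mem_Md_iff_trace_posDef_general (d : ℕ) (hd : 2 ≤ d)
    (R : Matrix (Fin d) (Fin d) ℝ) (hsym : R.IsSymm) :
    R ∈ Md d ↔ ((R.trace / ((d : ℝ) - 1)) • (1 : Matrix (Fin d) (Fin d) ℝ) - R).PosDef :=
  (mem_Md_iff_posDef_traceShift hd).trans (and_iff_right hsym)

/-- For `d ≥ 2` and a symmetric positive definite matrix `R`, one has `R ∈ M_d` if and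
only if `(tr R/(d−1))·Id − R` is positive definite. -/
theorem mem_Md_iff_trace_posDef (d : ℕ) (hd : 2 ≤ d)
    (R : Matrix (Fin d) (Fin d) ℝ) (hsym : R.IsSymm) (hpos : R.PosDef) :
    R ∈ Md d ↔ ((R.trace / ((d : ℝ) - 1)) • (1 : Matrix (Fin d) (Fin d) ℝ) - R).PosDef :=
  mem_Md_iff_trace_posDef_general d hd R hsym
end

section
/- M_2 = S^{2×2}_{++} (every symmetric positive definite 2×2 matrix lies in M_2), whereas for every d ≥ 3 the inclusion M_d ⊂ S^{d×d}_{++} is strict, i.e. there exists a symmetric positive definite d×d matrix not belonging to M_d. -/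
open Matrix

section Conic

variable {d : ℕ}

theorem sum_smul_sum_sq_smul_one_sub_vecMulVec_mem_mdConic {m : ℕ} (α : Fin m → ℝ)
    (w : Fin m → Fin d → ℝ) (hα : ∀ i, 0 < α i) (hw : ∀ i, w i ≠ 0) :
    ∑ i, α i • ((∑ j, w i j ^ 2) • (1 : Matrix (Fin d) (Fin d) ℝ) - vecMulVec (w i) (w i))
      ∈ MdConic d := by
  have hsq_pos : ∀ i, 0 < ∑ j, w i j ^ 2 := fun i => by
    obtain ⟨j, hj⟩ := Function.ne_iff.mp (hw i)
    exact Finset.sum_pos' (fun _ _ => sq_nonneg _) ⟨j, Finset.mem_univ _, sq_pos_of_ne_zero hj⟩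
  set r : Fin m → ℝ := fun i => √(∑ j, w i j ^ 2)
  have hr_sq : ∀ i, r i ^ 2 = ∑ j, w i j ^ 2 := fun i => Real.sq_sqrt (hsq_pos i).le
  have hr_ne : ∀ i, r i ≠ 0 := fun i => (Real.sqrt_pos.mpr (hsq_pos i)).ne'
  refine ⟨m, fun i => α i * r i ^ 2, fun i => (r i)⁻¹ • w i,
    fun i => mul_pos (hα i) (pow_pos (Real.sqrt_pos.mpr (hsq_pos i)) 2), fun i => ?_, ?_⟩
  · simp only [Pi.smul_apply, smul_eq_mul, mul_pow, ← Finset.mul_sum, ← hr_sq, inv_pow]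
    exact inv_mul_cancel₀ (pow_ne_zero 2 (hr_ne i))
  · refine Finset.sum_congr rfl fun i _ => ?_
    have hr_cancel : r i ^ 2 * ((r i)⁻¹ * (r i)⁻¹) = 1 := by field_simp [hr_ne i]
    rw [smul_vecMulVec, vecMulVec_smul, smul_smul, ← hr_sq]
    change _ = (α i * r i ^ 2) • _
    rw [mul_smul, smul_sub (r i ^ 2), smul_smul (r i ^ 2), hr_cancel, one_smul]

theorem trace_one_sub_vecMulVec_of_sum_sq_eq_one {b : Fin d → ℝ} (hb : ∑ j, b j ^ 2 = 1) :
    (1 - vecMulVec b b).trace = d - 1 := by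
  rw [trace_sub, trace_one, trace_vecMulVec, dotProduct, Fintype.card_fin, ← hb]
  simp only [sq]

theorem sub_one_mul_apply_le_trace_of_mem_mdConic {M : Matrix (Fin d) (Fin d) ℝ}
    (hM : M ∈ MdConic d) (j : Fin d) : (d - 1) * M j j ≤ M.trace := by
  obtain ⟨m, α, b, hα, hb, rfl⟩ := hM
  have hd : (1 : ℝ) ≤ d := Nat.one_le_cast.mpr (Fin.pos j)
  have hentry : (∑ i, α i • (1 - vecMulVec (b i) (b i))) j j ≤ ∑ i, α i := by
    simp only [Matrix.sum_apply, Matrix.smul_apply, Matrix.sub_apply, one_apply_eq,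
      vecMulVec_apply, smul_eq_mul]
    exact Finset.sum_le_sum fun i _ => by nlinarith [hα i, mul_self_nonneg (b i j)]
  have htrace : (∑ i, α i • (1 - vecMulVec (b i) (b i))).trace = (d - 1) * ∑ i, α i := by
    rw [trace_sum, Finset.mul_sum]
    refine Finset.sum_congr rfl fun i _ => ?_
    rw [trace_smul, trace_one_sub_vecMulVec_of_sum_sq_eq_one (hb i), smul_eq_mul, mul_comm]
  rw [htrace]
  exact mul_le_mul_of_nonneg_left hentry (by linarith)

theorem md_subset_mdConic : Md d ⊆ MdConic d :=
  fun _ ⟨hR, _, _, hRU, hU⟩ => hU _ hRU hR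

end Conic

theorem mem_mdConic_two {S : Matrix (Fin 2) (Fin 2) ℝ} (hS : S.IsSymm) (h11 : 0 < S 1 1)
    (hdet : 0 < S.det) : S ∈ MdConic 2 := by
  have h10 : S 1 0 = S 0 1 := hS.apply 0 1
  convert sum_smul_sum_sq_smul_one_sub_vecMulVec_mem_mdConic ![S.det / S 1 1, (S 1 1)⁻¹]
    ![![0, 1], ![S 1 1, -S 0 1]] (by simp [Fin.forall_fin_two, div_pos hdet h11, h11])
    (by simp [Fin.forall_fin_two, h11.ne'])
  rw [det_fin_two]
  ext i j
  fin_cases i <;> fin_cases j <;> simp [Fin.sum_univ_two, h10] <;> field_simp <;> ring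

theorem isOpen_setOf_apply_one_one_pos_det_pos :
    IsOpen {S : Matrix (Fin 2) (Fin 2) ℝ | 0 < S 1 1 ∧ 0 < S.det} :=
  (isOpen_lt continuous_const (continuous_id.matrix_elem 1 1)).inter
    (isOpen_lt continuous_const continuous_id.matrix_det)

theorem Matrix.PosDef.mem_md_two {R : Matrix (Fin 2) (Fin 2) ℝ} (hR : R.IsSymm) (hpos : R.PosDef) :
    R ∈ Md 2 :=
  ⟨hR, _, isOpen_setOf_apply_one_one_pos_det_pos, ⟨hpos.diag_pos, hpos.det_pos⟩,
    fun _ hS hSymm => mem_mdConic_two hSymm hS.1 hS.2⟩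

theorem exists_posDef_not_mem_md {d : ℕ} (hd : 3 ≤ d) :
    ∃ R : Matrix (Fin d) (Fin d) ℝ, R.IsSymm ∧ R.PosDef ∧ R ∉ Md d := by
  have : NeZero d := ⟨by omega⟩
  set v : Fin d → ℝ := 1 + Pi.single 0 2
  have hsingle : (0 : Fin d → ℝ) ≤ Pi.single 0 2 := Pi.single_nonneg.mpr zero_le_two
  have hv : ∀ i, 0 < v i := fun i => add_pos_of_pos_of_nonneg one_pos (hsingle i)
  refine ⟨diagonal v, isSymm_diagonal v, PosDef.diagonal hv, fun hR => ?_⟩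
  have key := sub_one_mul_apply_le_trace_of_mem_mdConic (md_subset_mdConic hR) 0
  have hd' : (3 : ℝ) ≤ d := by exact_mod_cast hd
  simp only [trace_diagonal, diagonal_apply_eq, v, Pi.add_apply, Finset.sum_add_distrib,
    Finset.sum_pi_single', Pi.one_apply, Finset.sum_const, Finset.card_univ, Fintype.card_fin] at key
  norm_num at key
  linarith

/-- `M_2` coincides with the symmetric positive definite `2×2` matrices, while for every
`d ≥ 3` the inclusion `M_d ⊂ S^{d×d}_{++}` is strict. -/
theorem M2_eq_posDef_and_Md_strict :
    (∀ R : Matrix (Fin 2) (Fin 2) ℝ, R.IsSymm → R.PosDef → R ∈ Md 2) ∧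
    (∀ d : ℕ, 3 ≤ d →
      ∃ R : Matrix (Fin d) (Fin d) ℝ, R.IsSymm ∧ R.PosDef ∧ R ∉ Md d) :=
  ⟨fun _ hR hpos => hpos.mem_md_two hR, fun _ => exists_posDef_not_mem_md⟩
end

section
/- Let d ≥ 2 and let v ∈ C^∞(𝕋^d, ℝ^d). Let u ∈ C^∞(𝕋^d, ℝ^d) satisfy Δu = v − fint_{𝕋^d} v with fint_{𝕋^d} u = 0, and let φ ∈ C^∞(𝕋^d) satisfy Δφ = div u with fint_{𝕋^d} φ = 0. Set 𝒬u = ∇φ + fint_{𝕋^d} u and 𝒫u = u − 𝒬u, and define the matrix field ℛv = ((d−2)/(2(d−1)))·(∇(𝒫u) + (∇(𝒫u))^T) + (d/(2(d−1)))·(∇u + (∇u)^T) + (1/(1−d))·(div u)·Id. Then for every x ∈ 𝕋^d the matrix ℛv(x) is symmetric and trace-free, and div(ℛv) = v − fint_{𝕋^d} v. -/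
open Real MeasureTheory

noncomputable section

/-- Partial derivative of `f : ℝ^d → ℝ` in the `j`-th coordinate direction. -/
def pder {d : ℕ} (f : (Fin d → ℝ) → ℝ) (j : Fin d) (x : Fin d → ℝ) : ℝ :=
  fderiv ℝ f x (Pi.single j 1)

/-- The average `fint_{𝕋^d} f = (2π)^{−d} ∫_{[0,2π]^d} f`. -/
def torusAvg (d : ℕ) (f : (Fin d → ℝ) → ℝ) : ℝ :=
  ((2 * π) ^ d)⁻¹ * ∫ x in Set.Icc (0 : Fin d → ℝ) (fun _ => 2 * π), f x

/-- The divergence of a vector field. -/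
def divVec {d : ℕ} (u : (Fin d → ℝ) → Fin d → ℝ) (x : Fin d → ℝ) : ℝ :=
  ∑ j, pder (fun y => u y j) j x

/-- The Leray projection `𝒫u = u − (∇φ + fint u)` of `u`, where `Δφ = div u`. -/
def Pfield {d : ℕ} (u : (Fin d → ℝ) → Fin d → ℝ) (φ : (Fin d → ℝ) → ℝ)
    (uavg : Fin d → ℝ) : (Fin d → ℝ) → Fin d → ℝ :=
  fun y l => u y l - (pder φ l y + uavg l)

/-- The matrix field
`ℛv = ((d−2)/(2(d−1)))(∇𝒫u + (∇𝒫u)ᵀ) + (d/(2(d−1)))(∇u + (∇u)ᵀ) + (1/(1−d))(div u)·Id`. -/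
def Rop (d : ℕ) (u : (Fin d → ℝ) → Fin d → ℝ) (φ : (Fin d → ℝ) → ℝ)
    (uavg : Fin d → ℝ) (x : Fin d → ℝ) : Matrix (Fin d) (Fin d) ℝ :=
  Matrix.of fun i j =>
    (((d : ℝ) - 2) / (2 * ((d : ℝ) - 1))) *
        (pder (fun y => Pfield u φ uavg y i) j x + pder (fun y => Pfield u φ uavg y j) i x)
      + ((d : ℝ) / (2 * ((d : ℝ) - 1))) *
        (pder (fun y => u y i) j x + pder (fun y => u y j) i x)
      + (1 / (1 - (d : ℝ))) * divVec u x * (if i = j then 1 else 0)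

/- ### Auxiliary lemmas about `pder` -/

lemma pder_smooth {d : ℕ} {f : (Fin d → ℝ) → ℝ} (hf : ContDiff ℝ (⊤ : ℕ∞) f) (j : Fin d) :
    ContDiff ℝ (⊤ : ℕ∞) (pder f j) := by
  have h1 : ContDiff ℝ (⊤ : ℕ∞) (fderiv ℝ f) := hf.fderiv_right (by simp)
  exact (ContinuousLinearMap.apply ℝ ℝ (Pi.single j 1)).contDiff.comp h1

lemma pder_diff {d : ℕ} {f : (Fin d → ℝ) → ℝ} (hf : ContDiff ℝ (⊤ : ℕ∞) f) (x : Fin d → ℝ) :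
    DifferentiableAt ℝ f x := (hf.differentiable (by simp)).differentiableAt

lemma pder_sub {d : ℕ} {f g : (Fin d → ℝ) → ℝ} {x : Fin d → ℝ}
    (hf : DifferentiableAt ℝ f x) (hg : DifferentiableAt ℝ g x) (j : Fin d) :
    pder (fun y => f y - g y) j x = pder f j x - pder g j x := by
  unfold pder; rw [fderiv_fun_sub hf hg]; simp

lemma pder_const {d : ℕ} (c : ℝ) (j : Fin d) (x : Fin d → ℝ) :
    pder (fun _ => c) j x = 0 := by
  unfold pder; simp

lemma pder_add {d : ℕ} {f g : (Fin d → ℝ) → ℝ} {x : Fin d → ℝ}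
    (hf : DifferentiableAt ℝ f x) (hg : DifferentiableAt ℝ g x) (j : Fin d) :
    pder (fun y => f y + g y) j x = pder f j x + pder g j x := by
  unfold pder; rw [fderiv_fun_add hf hg]; simp

lemma pder_sum {d : ℕ} {ι : Type*} (s : Finset ι) (f : ι → (Fin d → ℝ) → ℝ)
    {x : Fin d → ℝ} (h : ∀ k ∈ s, DifferentiableAt ℝ (f k) x) (j : Fin d) :
    pder (fun y => ∑ k ∈ s, f k y) j x = ∑ k ∈ s, pder (f k) j x := by
  unfold pder; rw [fderiv_fun_sum h]; simp

lemma pder_comm {d : ℕ} {f : (Fin d → ℝ) → ℝ} (hf : ContDiff ℝ (⊤ : ℕ∞) f) (i j : Fin d)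
    (x : Fin d → ℝ) : pder (pder f i) j x = pder (pder f j) i x := by
  have hd : ContDiff ℝ (⊤ : ℕ∞) (fderiv ℝ f) := hf.fderiv_right (by simp)
  have key : ∀ k l : Fin d, pder (pder f k) l x
      = fderiv ℝ (fderiv ℝ f) x (Pi.single l 1) (Pi.single k 1) := by
    intro k l
    have h2 : pder (pder f k) l x
        = fderiv ℝ (fun y => (fderiv ℝ f y) (Pi.single k 1)) x (Pi.single l 1) := rfl
    rw [h2, fderiv_clm_apply ((hd.differentiable (by simp)) x) (differentiableAt_const _)]
    simp
  rw [key, key]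
  exact hf.contDiffAt.isSymmSndFDerivAt (by rw [minSmoothness_of_isRCLikeNormedField]; exact WithTop.coe_le_coe.mpr le_top) _ _

lemma pder_comb5 {d : ℕ} (c1 c2 c3 c4 c5 : ℝ) {f1 f2 f3 f4 f5 : (Fin d → ℝ) → ℝ}
    (h1 : ContDiff ℝ (⊤ : ℕ∞) f1) (h2 : ContDiff ℝ (⊤ : ℕ∞) f2) (h3 : ContDiff ℝ (⊤ : ℕ∞) f3)
    (h4 : ContDiff ℝ (⊤ : ℕ∞) f4) (h5 : ContDiff ℝ (⊤ : ℕ∞) f5) (j : Fin d) (x : Fin d → ℝ) :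
    pder (fun y => c1 * f1 y + c2 * f2 y + c3 * f3 y + c4 * f4 y + c5 * f5 y) j x
      = c1 * pder f1 j x + c2 * pder f2 j x + c3 * pder f3 j x
        + c4 * pder f4 j x + c5 * pder f5 j x := by
  have H1 := (pder_diff h1 x).hasFDerivAt
  have H2 := (pder_diff h2 x).hasFDerivAt
  have H3 := (pder_diff h3 x).hasFDerivAt
  have H4 := (pder_diff h4 x).hasFDerivAt
  have H5 := (pder_diff h5 x).hasFDerivAt
  have H := ((((H1.const_mul c1).add (H2.const_mul c2)).add (H3.const_mul c3)).add
      (H4.const_mul c4)).add (H5.const_mul c5)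
  unfold pder
  rw [(show HasFDerivAt (fun y => c1 * f1 y + c2 * f2 y + c3 * f3 y + c4 * f4 y + c5 * f5 y) _ x from H).fderiv]
  simp [smul_eq_mul]

/-- The operator `ℛ = div⁻¹`: for smooth periodic `v`, the matrix field `ℛv` is
symmetric and trace-free, and `div (ℛv) = v − fint v`. -/
theorem Rop_symm_traceFree_div (d : ℕ) (hd : 2 ≤ d)
    (v u : (Fin d → ℝ) → Fin d → ℝ) (φ : (Fin d → ℝ) → ℝ)
    (hv : ContDiff ℝ (⊤ : ℕ∞) (fun x => v x)) (hu : ContDiff ℝ (⊤ : ℕ∞) (fun x => u x))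
    (hφ : ContDiff ℝ (⊤ : ℕ∞) φ)
    (hvper : ∀ (x : Fin d → ℝ) (m : Fin d → ℤ), v (fun i => x i + 2 * π * m i) = v x)
    (huper : ∀ (x : Fin d → ℝ) (m : Fin d → ℤ), u (fun i => x i + 2 * π * m i) = u x)
    (hφper : ∀ (x : Fin d → ℝ) (m : Fin d → ℤ), φ (fun i => x i + 2 * π * m i) = φ x)
    -- Δu = v − fint v
    (hΔu : ∀ (x : Fin d → ℝ) (i : Fin d),
      ∑ j, pder (fun y => pder (fun z => u z i) j y) j x
        = v x i - torusAvg d (fun y => v y i))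
    -- fint u = 0
    (huavg : ∀ i, torusAvg d (fun y => u y i) = 0)
    -- Δφ = div u
    (hΔφ : ∀ x : Fin d → ℝ,
      ∑ j, pder (fun y => pder φ j y) j x = divVec u x)
    -- fint φ = 0
    (hφavg : torusAvg d φ = 0) :
    (∀ x : Fin d → ℝ,
      (Rop d u φ (fun i => torusAvg d (fun y => u y i)) x).IsSymm) ∧
    (∀ x : Fin d → ℝ,
      (Rop d u φ (fun i => torusAvg d (fun y => u y i)) x).trace = 0) ∧
    (∀ (x : Fin d → ℝ) (i : Fin d),
      ∑ j, pder (fun y => Rop d u φ (fun l => torusAvg d (fun z => u z l)) y i j) j x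
        = v x i - torusAvg d (fun y => v y i)) := by
  have hd1 : (d : ℝ) - 1 ≠ 0 := by
    have : (2 : ℝ) ≤ (d : ℝ) := by exact_mod_cast hd
    intro h; linarith
  have h1d : 1 - (d : ℝ) ≠ 0 := by
    intro h; apply hd1; linarith
  set ua : Fin d → ℝ := fun i => torusAvg d (fun y => u y i) with hua
  have hui : ∀ l, ContDiff ℝ (⊤ : ℕ∞) (fun y => u y l) := fun l => contDiff_pi.mp hu l
  have hφl : ∀ l : Fin d, ContDiff ℝ (⊤ : ℕ∞) (pder φ l) := fun l => pder_smooth hφ l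
  have hP : ∀ l, ContDiff ℝ (⊤ : ℕ∞) (fun y => Pfield u φ ua y l) := by
    intro l
    exact (hui l).sub ((hφl l).add contDiff_const)
  have hdvu : ContDiff ℝ (⊤ : ℕ∞) (divVec u) := by
    unfold divVec
    exact ContDiff.sum (fun j _ => pder_smooth (hui j) j)
  -- The first derivatives of the components of `𝒫u`:
  have hPder : ∀ (l j : Fin d) (x : Fin d → ℝ),
      pder (fun y => Pfield u φ ua y l) j x
        = pder (fun y => u y l) j x - pder (pder φ l) j x := by
    intro l j x
    unfold Pfield
    rw [pder_sub (pder_diff (hui l) x) (pder_diff ((hφl l).add contDiff_const) x) j,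
      pder_add (pder_diff (hφl l) x) (differentiableAt_const _) j, pder_const]
    ring
  -- `div 𝒫u = 0`:
  have hdivP : ∀ x : Fin d → ℝ, ∑ l, pder (fun y => Pfield u φ ua y l) l x = 0 := by
    intro x
    rw [Finset.sum_congr rfl (fun l _ => hPder l l x), Finset.sum_sub_distrib]
    have h1 : ∑ l, pder (pder φ l) l x = divVec u x := hΔφ x
    rw [h1]
    simp [divVec]
  -- `∑_j ∂_j∂_j∂_i φ = ∂_i (div u)`:
  have hB : ∀ (i : Fin d) (x : Fin d → ℝ),
      ∑ j, pder (pder (pder φ j) j) i x = pder (divVec u) i x := by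
    intro i x
    rw [← pder_sum Finset.univ _ (fun j _ => pder_diff (pder_smooth (hφl j) j) x) i]
    congr 1
    funext y
    exact hΔφ y
  -- `∑_j ∂_i∂_j u_j = ∂_i (div u)`:
  have hC : ∀ (i : Fin d) (x : Fin d → ℝ),
      ∑ j, pder (pder (fun z => u z j) j) i x = pder (divVec u) i x := by
    intro i x
    rw [← pder_sum Finset.univ _ (fun j _ => pder_diff (pder_smooth (hui j) j) x) i]
    rfl
  refine ⟨?_, ?_, ?_⟩
  · -- symmetry
    intro x
    rw [Matrix.IsSymm]
    ext i j
    simp only [Matrix.transpose_apply, Rop, Matrix.of_apply]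
    have h : (if j = i then (1:ℝ) else 0) = (if i = j then 1 else 0) := by
      by_cases h : i = j
      · simp [h]
      · simp [h, Ne.symm h]
    rw [h]; ring
  · -- trace free
    intro x
    have hdiag : ∀ i : Fin d, Rop d u φ ua x i i
        = 2 * (((d : ℝ) - 2) / (2 * ((d : ℝ) - 1))) * pder (fun y => Pfield u φ ua y i) i x
          + 2 * ((d : ℝ) / (2 * ((d : ℝ) - 1))) * pder (fun y => u y i) i x
          + (1 / (1 - (d : ℝ))) * divVec u x := by
      intro i
      simp only [Rop, Matrix.of_apply]
      norm_num
      ring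
    rw [Matrix.trace]
    simp only [Matrix.diag_apply]
    rw [Finset.sum_congr rfl (fun i _ => hdiag i), Finset.sum_add_distrib,
      Finset.sum_add_distrib, ← Finset.mul_sum, ← Finset.mul_sum, hdivP x,
      Finset.sum_const, Finset.card_univ, Fintype.card_fin]
    have h2 : ∑ i, pder (fun y => u y i) i x = divVec u x := rfl
    rw [h2, nsmul_eq_mul]
    field_simp
    ring
  · -- divergence
    intro x i
    set a : ℝ := ((d : ℝ) - 2) / (2 * ((d : ℝ) - 1)) with ha
    set b : ℝ := (d : ℝ) / (2 * ((d : ℝ) - 1)) with hb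
    set c : ℝ := 1 / (1 - (d : ℝ)) with hc
    have hterm : ∀ j : Fin d,
        pder (fun y => Rop d u φ ua y i j) j x
          = a * (pder (pder (fun z => u z i) j) j x - pder (pder (pder φ j) j) i x)
            + a * (pder (pder (fun z => u z j) j) i x - pder (pder (pder φ j) j) i x)
            + b * pder (pder (fun z => u z i) j) j x
            + b * pder (pder (fun z => u z j) j) i x
            + (c * (if i = j then 1 else 0)) * pder (divVec u) j x := by
      intro j
      have hrewrite : (fun y => Rop d u φ ua y i j)
          = fun y => a * pder (fun z => Pfield u φ ua z i) j y
              + a * pder (fun z => Pfield u φ ua z j) i y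
              + b * pder (fun z => u z i) j y
              + b * pder (fun z => u z j) i y
              + (c * (if i = j then 1 else 0)) * divVec u y := by
        funext y
        simp only [Rop, Matrix.of_apply]
        ring
      rw [hrewrite, pder_comb5 a a b b (c * (if i = j then 1 else 0))
        (pder_smooth (hP i) j) (pder_smooth (hP j) i)
        (pder_smooth (hui i) j) (pder_smooth (hui j) i) hdvu j x]
      -- rewrite the 𝒫u second derivatives
      have e1 : pder (fun z => Pfield u φ ua z i) j
          = fun y => pder (fun z => u z i) j y - pder (pder φ i) j y :=
        funext (hPder i j)
      have e2 : pder (fun z => Pfield u φ ua z j) i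
          = fun y => pder (fun z => u z j) i y - pder (pder φ j) i y :=
        funext (hPder j i)
      rw [e1, e2,
        pder_sub (pder_diff (pder_smooth (hui i) j) x)
          (pder_diff (pder_smooth (hφl i) j) x) j,
        pder_sub (pder_diff (pder_smooth (hui j) i) x)
          (pder_diff (pder_smooth (hφl j) i) x) j]
      -- commute derivatives
      have c1 : pder (pder φ i) j = pder (pder φ j) i := funext (pder_comm hφ i j)
      have c2 : pder (pder (pder φ j) i) j x = pder (pder (pder φ j) j) i x :=
        pder_comm (hφl j) i j x
      have c3 : pder (pder (fun z => u z j) i) j x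
          = pder (pder (fun z => u z j) j) i x := pder_comm (hui j) i j x
      rw [c1, c2, c3]
    rw [Finset.sum_congr rfl (fun j _ => hterm j)]
    have hdelta : ∑ j, (c * (if i = j then 1 else 0)) * pder (divVec u) j x
        = c * pder (divVec u) i x := by
      rw [Finset.sum_congr rfl (fun j _ =>
        show (c * (if i = j then 1 else 0)) * pder (divVec u) j x
          = (if i = j then c * pder (divVec u) j x else 0) by
            by_cases h : i = j <;> simp [h])]
      simp
    rw [Finset.sum_add_distrib, Finset.sum_add_distrib, Finset.sum_add_distrib,
      Finset.sum_add_distrib, ← Finset.mul_sum, ← Finset.mul_sum, ← Finset.mul_sum,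
      ← Finset.mul_sum, hdelta, Finset.sum_sub_distrib, Finset.sum_sub_distrib,
      hΔu x i, hB i x, hC i x]
    rw [ha, hb, hc]
    field_simp
    ring
end
end

section
/- Let 0 < ζ ≤ 1/2, 0 < ε < 1/2, A ≥ 1, and let γ, γ' be real numbers with γ' > γ > 3(1+2ε)/(1−2ε). Define δ_n = ζ^{2((3/2)^n − 1)} for n ≥ 0 (so δ_0 = 1 and δ_{n+1} = ζδ_n^{3/2}). Suppose (D_n)_{n≥0} is a sequence with D_n ≥ 1 for all n and D_{n+1} ≤ A·δ_n^{3/2}·(D_n/δ_{n+1}²)^{1+ε} for all n ≥ 0. Then there exists a constant C' > 0, depending only on ζ, ε, A, γ, γ' and D_0, such that D_{n+1} ≤ C'·ζ^{−3γ'(3/2)^n} for all n ≥ 0. -/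
set_option maxHeartbeats 1000000 in
/-- Convergence of the `C¹` bounds: if `D_{n+1} ≤ A δ_n^{3/2} (D_n/δ_{n+1}²)^{1+ε}` with
`δ_n = ζ^{2((3/2)^n−1)}`, then `D_{n+1} ≤ C' ζ^{−3γ'(3/2)^n}` for some constant `C'`. -/
theorem growth_of_C1_bounds (ζ ε A γ γ' : ℝ)
    (hζ : 0 < ζ) (hζ' : ζ ≤ 1 / 2) (hε : 0 < ε) (hε' : ε < 1 / 2) (hA : 1 ≤ A)
    (hγ : 3 * (1 + 2 * ε) / (1 - 2 * ε) < γ) (hγ' : γ < γ')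
    (δ : ℕ → ℝ) (hδ : ∀ n : ℕ, δ n = ζ ^ (2 * (((3 : ℝ) / 2) ^ (n : ℕ) - 1)))
    (D : ℕ → ℝ) (hD1 : ∀ n, 1 ≤ D n)
    (hDrec : ∀ n : ℕ, D (n + 1) ≤ A * δ n ^ ((3 : ℝ) / 2) * (D n / (δ (n + 1)) ^ (2 : ℕ)) ^ (1 + ε)) :
    ∃ C' : ℝ, 0 < C' ∧ ∀ n : ℕ, D (n + 1) ≤ C' * ζ ^ (-3 * γ' * ((3 : ℝ) / 2) ^ (n : ℕ)) := by
  have hζ1 : ζ < 1 := lt_of_le_of_lt hζ' (by norm_num)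
  have hlogζ : Real.log ζ < 0 := Real.log_neg hζ hζ1
  have hApos : 0 < A := lt_of_lt_of_le one_pos hA
  obtain ⟨L, hLdef⟩ : ∃ L : ℝ, L = -Real.log ζ := ⟨_, rfl⟩
  have hLpos : 0 < L := by rw [hLdef]; linarith
  have hDpos : ∀ n, 0 < D n := fun n => lt_of_lt_of_le one_pos (hD1 n)
  have hδpos : ∀ n, 0 < δ n := fun n => by
    rw [hδ]; exact Real.rpow_pos_of_pos hζ _
  have hlogδ : ∀ n, Real.log (δ n) = 2 * (((3:ℝ)/2) ^ n - 1) * (-L) := fun n => by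
    rw [hδ, Real.log_rpow hζ, hLdef]; ring
  obtain ⟨x, hxdef⟩ : ∃ x : ℕ → ℝ, x = fun n => Real.log (D n) := ⟨_, rfl⟩
  have hxnn : ∀ n, 0 ≤ x n := fun n => by rw [hxdef]; exact Real.log_nonneg (hD1 n)
  have hlogA : 0 ≤ Real.log A := Real.log_nonneg hA
  have h2ε : 0 < 1 - 2*ε := by linarith
  have hγpos : 0 < γ := lt_trans (div_pos (by linarith) h2ε) hγ
  -- Step 1: the log recursion
  have hstep : ∀ n, x (n+1) ≤ (1+ε) * x n + ((3+6*ε)*L) * ((3:ℝ)/2) ^ n + Real.log A := by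
    intro n
    have hqpos : 0 < D n / (δ (n+1)) ^ (2:ℕ) := div_pos (hDpos n) (pow_pos (hδpos _) 2)
    have t1 : 0 < δ n ^ ((3:ℝ)/2) := Real.rpow_pos_of_pos (hδpos n) _
    have t2 : 0 < (D n / (δ (n+1)) ^ (2:ℕ)) ^ (1+ε) := Real.rpow_pos_of_pos hqpos _
    have h1 : Real.log (D (n+1)) ≤
        Real.log (A * δ n ^ ((3:ℝ)/2) * (D n / (δ (n+1)) ^ (2:ℕ)) ^ (1+ε)) :=
      Real.log_le_log (hDpos _) (hDrec n)
    rw [Real.log_mul (ne_of_gt (mul_pos hApos t1)) (ne_of_gt t2),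
        Real.log_mul (ne_of_gt hApos) (ne_of_gt t1),
        Real.log_rpow (hδpos n), Real.log_rpow hqpos,
        Real.log_div (ne_of_gt (hDpos n)) (ne_of_gt (pow_pos (hδpos _) 2)),
        Real.log_pow, hlogδ, hlogδ] at h1
    have hpow : ((3:ℝ)/2) ^ (n+1) = (3/2) * ((3:ℝ)/2) ^ n := by ring
    rw [hpow] at h1
    simp only [hxdef]
    nlinarith [mul_pos hε hLpos, hLpos]
  -- Step 2: solve the recursion by induction
  obtain ⟨a, hadef⟩ : ∃ a : ℝ, a = (3+6*ε)*L := ⟨_, rfl⟩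
  have hapos : 0 < a := by rw [hadef]; positivity
  obtain ⟨S, hSdef⟩ : ∃ S : ℝ, S = Real.log A / ε := ⟨_, rfl⟩
  have hSnn : 0 ≤ S := by rw [hSdef]; exact div_nonneg hlogA (le_of_lt hε)
  have hεS : ε * S = Real.log A := by
    rw [hSdef]; field_simp
  obtain ⟨P, hPdef⟩ : ∃ P : ℝ, P = 2*a/(1-2*ε) := ⟨_, rfl⟩
  have hPpos : 0 < P := by rw [hPdef]; positivity
  obtain ⟨R, hRdef⟩ : ∃ R : ℝ, R = x 0 + S := ⟨_, rfl⟩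
  have hRnn : 0 ≤ R := by rw [hRdef]; exact add_nonneg (hxnn 0) hSnn
  have haP : a = (1/2 - ε) * P := by
    rw [hPdef]; field_simp
  have main : ∀ n, x n ≤ P * ((3:ℝ)/2) ^ n + R * (1+ε) ^ n - S := by
    intro n
    induction n with
    | zero => simp only [pow_zero, mul_one]; linarith
    | succ n ih =>
      have hscaled : (1+ε) * x n ≤ (1+ε) * (P * ((3:ℝ)/2) ^ n + R * (1+ε) ^ n - S) :=
        mul_le_mul_of_nonneg_left ih (by linarith)
      have h2 : a * ((3:ℝ)/2) ^ n = (1/2 - ε) * (P * ((3:ℝ)/2) ^ n) := by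
        rw [haP]; ring
      have hp1 : ((3:ℝ)/2) ^ (n+1) = (3/2) * ((3:ℝ)/2) ^ n := by ring
      have hp2 : ((1:ℝ)+ε) ^ (n+1) = (1+ε) * ((1:ℝ)+ε) ^ n := by ring
      rw [hp1, hp2]
      have hs := hstep n
      rw [hadef] at h2
      nlinarith [hεS]
  -- Step 3: bound (3/2)*P by 3*L*γ
  have hP32 : (3/2) * P ≤ 3 * L * γ := by
    have h1 : P * (1-2*ε) = 2*a := by
      rw [hPdef]; field_simp
    have h2 : 3*(1+2*ε) < γ*(1-2*ε) := by
      rw [div_lt_iff₀ h2ε] at hγ; linarith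
    have h3 : 2*L*(3*(1+2*ε)) ≤ 2*L*(γ*(1-2*ε)) :=
      mul_le_mul_of_nonneg_left (le_of_lt h2) (by linarith)
    have h4 : P * (1-2*ε) ≤ 2*L*γ*(1-2*ε) := by rw [h1, hadef]; nlinarith
    have h5 : P ≤ 2*L*γ := le_of_mul_le_mul_right (by linarith [h4]) h2ε
    linarith
  -- Step 4: absorb the (1+ε)^n term
  obtain ⟨d, hddef⟩ : ∃ d : ℝ, d = 3 * L * (γ' - γ) := ⟨_, rfl⟩
  have hdpos : 0 < d := by
    rw [hddef]; have : 0 < γ' - γ := by linarith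
    positivity
  have hr1 : ((1+ε)/((3:ℝ)/2)) < 1 := by
    rw [div_lt_one (by norm_num)]; linarith
  have hr0 : (0:ℝ) ≤ (1+ε)/((3:ℝ)/2) := by positivity
  obtain ⟨N, hN⟩ : ∃ N : ℕ, ((1+ε)/((3:ℝ)/2)) ^ N < d / ((R+1)*(1+ε)) := by
    apply exists_pow_lt_of_lt_one _ hr1
    positivity
  obtain ⟨M, hMdef⟩ : ∃ M : ℝ, M = R * (1+ε) ^ (N+1) := ⟨_, rfl⟩
  have hMnn : 0 ≤ M := by rw [hMdef]; positivity
  have habsorb : ∀ n : ℕ, R * (1+ε) ^ (n+1) ≤ M + d * ((3:ℝ)/2) ^ n := by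
    intro n
    rcases le_or_gt n N with h | h
    · have h1 : R * (1+ε) ^ (n+1) ≤ M := by
        rw [hMdef]
        apply mul_le_mul_of_nonneg_left _ hRnn
        exact pow_le_pow_right₀ (by linarith) (by omega)
      have h2 : 0 ≤ d * ((3:ℝ)/2) ^ n := by positivity
      linarith
    · have key : ((1+ε)/((3:ℝ)/2)) ^ n ≤ ((1+ε)/((3:ℝ)/2)) ^ N :=
        pow_le_pow_of_le_one hr0 (le_of_lt hr1) (le_of_lt h)
      have hexp : ((1+ε)/((3:ℝ)/2)) ^ n * ((3:ℝ)/2) ^ n = ((1:ℝ)+ε) ^ n := by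
        rw [← mul_pow]; congr 1; field_simp
      have h32n : (0:ℝ) < ((3:ℝ)/2) ^ n := by positivity
      have hRe : (0:ℝ) < (R+1)*(1+ε) := by positivity
      have step1 : R * (1+ε) ^ (n+1) ≤ (R+1)*(1+ε) * (((1+ε)/((3:ℝ)/2)) ^ n * ((3:ℝ)/2) ^ n) := by
        rw [hexp]
        have hpn : (0:ℝ) ≤ ((1:ℝ)+ε) ^ n := pow_nonneg (by linarith) n
        have hp2 : ((1:ℝ)+ε) ^ (n+1) = (1+ε) * ((1:ℝ)+ε) ^ n := by ring
        rw [hp2]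
        nlinarith [mul_nonneg (show (0:ℝ) ≤ 1+ε by linarith) hpn]
      have step2 : (R+1)*(1+ε) * ((1+ε)/((3:ℝ)/2)) ^ n ≤ d := by
        calc (R+1)*(1+ε) * ((1+ε)/((3:ℝ)/2)) ^ n
            ≤ (R+1)*(1+ε) * ((1+ε)/((3:ℝ)/2)) ^ N :=
              mul_le_mul_of_nonneg_left key (le_of_lt hRe)
          _ ≤ (R+1)*(1+ε) * (d / ((R+1)*(1+ε))) :=
              mul_le_mul_of_nonneg_left (le_of_lt hN) (le_of_lt hRe)
          _ = d := by field_simp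
      have h1 : R * (1+ε) ^ (n+1) ≤ d * ((3:ℝ)/2) ^ n := by
        calc R * (1+ε) ^ (n+1)
            ≤ (R+1)*(1+ε) * (((1+ε)/((3:ℝ)/2)) ^ n * ((3:ℝ)/2) ^ n) := step1
          _ = ((R+1)*(1+ε) * ((1+ε)/((3:ℝ)/2)) ^ n) * ((3:ℝ)/2) ^ n := by ring
          _ ≤ d * ((3:ℝ)/2) ^ n := mul_le_mul_of_nonneg_right step2 (le_of_lt h32n)
      linarith
  -- Final bound
  refine ⟨Real.exp M, Real.exp_pos M, fun n => ?_⟩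
  have hx1 : x (n+1) ≤ 3 * L * γ' * ((3:ℝ)/2) ^ n + M := by
    have h1 := main (n+1)
    have hp1 : ((3:ℝ)/2) ^ (n+1) = (3/2) * ((3:ℝ)/2) ^ n := by ring
    rw [hp1] at h1
    have h2 := habsorb n
    have h3 : (3/2) * P * ((3:ℝ)/2) ^ n ≤ 3 * L * γ * ((3:ℝ)/2) ^ n :=
      mul_le_mul_of_nonneg_right hP32 (by positivity)
    have hd' : d * ((3:ℝ)/2) ^ n = 3*L*γ' * ((3:ℝ)/2)^n - 3*L*γ * ((3:ℝ)/2)^n := by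
      rw [hddef]; ring
    nlinarith [hSnn]
  have hDe : D (n+1) = Real.exp (x (n+1)) := by
    rw [hxdef]; exact (Real.exp_log (hDpos (n+1))).symm
  have hζe : ζ ^ (-3 * γ' * ((3:ℝ)/2) ^ (n:ℕ)) = Real.exp (3 * L * γ' * ((3:ℝ)/2) ^ n) := by
    rw [Real.rpow_def_of_pos hζ]
    congr 1
    have hl : Real.log ζ = -L := by rw [hLdef]; ring
    rw [hl]; ring
  rw [hDe, hζe, ← Real.exp_add]
  exact Real.exp_le_exp.mpr (by linarith)
end
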